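/- arXiv:2111.12372 — 2 statements merged into one kernel-verified Lean document; each statement's English description precedes it below -/
import Mathlib

section
/- Correctness of the MUX-based bit comparison: for bits a, b, carry ∈ {0,1}, the value MUX(a XNOR b, carry, a) (which returns carry if a = b, and a otherwise) equals 1 if and only if either a > b, or a = b and carry = 1. Iterating this from least to most significant bit over n-bit numbers a and b with initial carry 0 yields final output 1 if and only if val(a) > val(b). -/
/-- The value of a little-endian list of bits. -/
def bitsVal : List Bool → ℕ
  | [] => 0
  | b :: bs => b.toNat + 2 * bitsVal bs

/-- Multiplexer: returns `t` if `c` is true, else `f`. -/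
def mux (c t f : Bool) : Bool := if c then t else f

/-- One step of the bit comparison: `MUX(a XNOR b, carry, a)`. -/
def cmp1 (a b carry : Bool) : Bool := mux (a == b) carry a

lemma cmp_aux : ∀ (a b : List Bool), a.length = b.length → ∀ c : Bool,
    ((a.zip b).foldl (fun c p => cmp1 p.1 p.2 c) c = true ↔
      (bitsVal b < bitsVal a ∨ (bitsVal a = bitsVal b ∧ c = true))) := by
  intro a
  induction a with
  | nil => intro b h c; simp [List.length_eq_zero_iff.mp h.symm, bitsVal]
  | cons x xs ih =>
    intro b h c
    cases b with
    | nil => simp at h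
    | cons y ys =>
      simp only [List.zip_cons_cons, List.foldl_cons]
      rw [ih ys (by simpa using h) (cmp1 x y c)]
      cases x <;> cases y <;> cases c <;> simp [cmp1, mux, bitsVal] <;> omega

/-- Correctness of the MUX-based comparison: `cmp1 a b c` is true iff `a > b`,
or `a = b` and `c` is true; iterating from the least to the most significant
bit with initial carry `0` decides `val a > val b`. -/
theorem mux_comparison_correct :
    (∀ a b c : Bool,
      cmp1 a b c = true ↔ (b.toNat < a.toNat ∨ (a = b ∧ c = true))) ∧
    (∀ (n : ℕ) (a b : List Bool), a.length = n → b.length = n →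
      ((a.zip b).foldl (fun c p => cmp1 p.1 p.2 c) false = true ↔
        bitsVal b < bitsVal a)) := by
  constructor
  · intro a b c; cases a <;> cases b <;> cases c <;> simp [cmp1, mux]
  · intro n a b ha hb
    rw [cmp_aux a b (by omega) false]
    simp
end

section
/- Correctness of schoolbook n-bit multiplication: if for each i the partial product (a shifted left by i positions, ANDed bitwise with b_i) is accumulated with 2n-bit addition, the final 2n-bit result, interpreted as a natural number, equals val(a)·val(b). -/
/-- The value of an `n`-bit number given as a Boolean vector (little-endian). -/
def bvVal {n : ℕ} (a : Fin n → Bool) : ℕ := ∑ i, (a i).toNat * 2 ^ (i : ℕ)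

lemma bvVal_lt {n : ℕ} (a : Fin n → Bool) : bvVal a < 2 ^ n := by
  have h : bvVal a ≤ ∑ i : Fin n, 1 * 2 ^ (i : ℕ) := by
    apply Finset.sum_le_sum
    intro i _
    exact Nat.mul_le_mul_right _ (Bool.toNat_le _)
  calc bvVal a ≤ ∑ i : Fin n, 1 * 2 ^ (i : ℕ) := h
    _ = ∑ i ∈ Finset.range n, 2 ^ i := by
        rw [Finset.sum_range fun i => 2 ^ i]; simp
    _ = 2 ^ n - 1 := by
        rw [Nat.geomSum_eq (le_refl 2)]; simp
    _ < 2 ^ n := by have := Nat.one_le_two_pow (n := n); omega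

/-- Correctness of schoolbook `n`-bit multiplication: accumulating the partial
products `b_i · val(a) · 2^i` yields `val(a) · val(b)`, which fits in `2n` bits. -/
theorem schoolbook_mult_correct (n : ℕ) (a b : Fin n → Bool) :
    (∑ i, (b i).toNat * bvVal a * 2 ^ (i : ℕ)) = bvVal a * bvVal b ∧
    bvVal a * bvVal b < 2 ^ (2 * n) := by
  constructor
  · rw [show bvVal b = ∑ i, (b i).toNat * 2 ^ (i : ℕ) from rfl, Finset.mul_sum]
    apply Finset.sum_congr rfl
    intro i _
    ring
  · calc bvVal a * bvVal b < 2 ^ n * 2 ^ n :=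
        Nat.mul_lt_mul_of_lt_of_lt (bvVal_lt a) (bvVal_lt b)
      _ = 2 ^ (2 * n) := by rw [← pow_add, two_mul]
end
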